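/- arXiv:1106.2122 — 2 statements merged into one kernel-verified Lean document; each statement's English description precedes it below -/
import Mathlib

section
/- In a 1-safe Petri net with vertex cover VC of its flow graph, if places p1,...,pi are not in VC and all have the same VC-interface, and M is a marking reachable from the initial marking with M(pj)=1 for some j, then no transition enabled at M has any of p1,...,pi as an output place (i.e., adds a token to any of them). -/
/-- A Petri net: places `P`, transitions `T`, incidence functions. -/
structure PetriNet (P T : Type) where
  Pre : P → T → ℕ
  Post : P → T → ℕ

variable {P T : Type}

def enabled (N : PetriNet P T) (M : P → ℕ) (t : T) : Prop := ∀ p, N.Pre p t ≤ M p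

def fire (N : PetriNet P T) (M : P → ℕ) (t : T) : P → ℕ :=
  fun p => M p - N.Pre p t + N.Post p t

def step (N : PetriNet P T) (M M' : P → ℕ) : Prop :=
  ∃ t, enabled N M t ∧ M' = fire N M t

def reachable (N : PetriNet P T) (M0 M : P → ℕ) : Prop :=
  Relation.ReflTransGen (step N) M0 M

/-- `1`-safety: every reachable marking has at most one token per place. -/
def oneSafe (N : PetriNet P T) (M0 : P → ℕ) : Prop :=
  ∀ M, reachable N M0 M → ∀ p, M p ≤ 1

def incident (N : PetriNet P T) (p : P) (t : T) : Prop := 1 ≤ N.Pre p t + N.Post p t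

/-- The flow graph of a Petri net (with a self loop at `p` when `p` is both an
input and an output place of some transition). -/
def flowAdj (N : PetriNet P T) (p1 p2 : P) : Prop :=
  (p1 ≠ p2 ∧ ∃ t, incident N p1 t ∧ incident N p2 t) ∨
  (p1 = p2 ∧ ∃ t, N.Pre p1 t = 1 ∧ N.Post p1 t = 1)

def isVertexCover (N : PetriNet P T) (VC : Set P) : Prop :=
  ∀ p1 p2, flowAdj N p1 p2 → p1 ∈ VC ∨ p2 ∈ VC

/-- The `VC`-neighbourhood of a transition: its input and output places inside `VC`. -/
def nbhd (N : PetriNet P T) (VC : Set P) (t : T) : Set P × Set P :=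
  ({p | p ∈ VC ∧ N.Pre p t = 1}, {p | p ∈ VC ∧ N.Post p t = 1})

def effect (N : PetriNet P T) (p : P) (t : T) : ℤ :=
  (N.Post p t : ℤ) - (N.Pre p t : ℤ)

/-- The `VC`-interface of a place: for each neighbourhood, the set of net effects
`w ∈ {1, -1}` realized on `p` by transitions of that neighbourhood. -/
def interface (N : PetriNet P T) (VC : Set P) (p : P) : Set P × Set P → Set ℤ :=
  fun nb => {w | (w = 1 ∨ w = -1) ∧ ∃ t, nbhd N VC t = nb ∧ effect N p t = w}

/-!
If a transition enabled at `M` puts a token on `ps a`, the equal interfaces give a transition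
`t'` with the same `VC`-neighbourhood that puts a token on the marked place `ps j`. Every input
place of `t'` lies in `VC`, since it shares `t'` with `ps j ∉ VC`; so `t'` has the same input
places as `t` and is enabled at `M` too. Firing it puts a second token on `ps j`.
-/

lemma effect_eq_one_iff {N : PetriNet P T} {p : P} {t : T} (hpost : N.Post p t ≤ 1) :
    effect N p t = 1 ↔ N.Pre p t = 0 ∧ N.Post p t = 1 := by
  unfold effect
  omega

lemma oneSafe.effect_ne_one_of_marked {N : PetriNet P T} {M0 M : P → ℕ} (hsafe : oneSafe N M0)
    (hreach : reachable N M0 M) {p : P} (hp : M p = 1) {t : T} (ht : enabled N M t) :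
    effect N p t ≠ 1 := by
  have hfire := hsafe _ (hreach.tail ⟨t, ht, rfl⟩) p
  have hpre := ht p
  unfold fire at hfire
  unfold effect
  omega

lemma isVertexCover.mem_of_incident {N : PetriNet P T} {VC : Set P} (hvc : isVertexCover N VC)
    {p q : P} {t : T} (hq : q ∉ VC) (hqt : incident N q t) (hpt : incident N p t) (hpq : p ≠ q) :
    p ∈ VC :=
  (hvc p q (Or.inl ⟨hpq, t, hpt, hqt⟩)).resolve_right hq

lemma enabled_of_nbhd_eq {N : PetriNet P T} {VC : Set P} {M : P → ℕ} {t t' : T}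
    (hpre : ∀ p, N.Pre p t' ≤ 1) (hnb : nbhd N VC t' = nbhd N VC t) (ht : enabled N M t)
    (hin : ∀ p, N.Pre p t' ≠ 0 → p ∈ VC) : enabled N M t' := by
  intro p
  by_cases hp : N.Pre p t' = 0
  · simp [hp]
  have hp1 : N.Pre p t' = 1 := by have := hpre p; omega
  have hmem : p ∈ (nbhd N VC t).1 := hnb ▸ ⟨hin p hp, hp1⟩
  exact hp1 ▸ hmem.2 ▸ ht p

/-- In a 1-safe Petri net, if places `ps 0, …, ps (i-1)` outside a vertex cover `VC`
of the flow graph all have the same `VC`-interface, and a reachable marking `M` puts a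
token on one of them, then no transition enabled at `M` adds a token to any of them. -/
theorem oneSafe_same_interface_no_add
    (N : PetriNet P T) (M0 : P → ℕ)
    (h01 : ∀ p t, N.Pre p t ≤ 1 ∧ N.Post p t ≤ 1)
    (hsafe : oneSafe N M0)
    (VC : Set P) (hvc : isVertexCover N VC)
    (i : ℕ) (ps : Fin i → P) (hout : ∀ a, ps a ∉ VC)
    (hintf : ∀ a b, interface N VC (ps a) = interface N VC (ps b))
    (M : P → ℕ) (hreach : reachable N M0 M)
    (j : Fin i) (hj : M (ps j) = 1) :
    ∀ t, enabled N M t → ∀ a, ¬ (N.Pre (ps a) t = 0 ∧ N.Post (ps a) t = 1) := by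
  rintro t ht a hadd
  have hone : (1 : ℤ) ∈ interface N VC (ps j) (nbhd N VC t) :=
    hintf a j ▸ ⟨Or.inl rfl, t, rfl, (effect_eq_one_iff (h01 _ t).2).2 hadd⟩
  obtain ⟨-, t', hnb, heff⟩ := hone
  obtain ⟨hpre, hpost⟩ := (effect_eq_one_iff (h01 _ t').2).1 heff
  have hin : ∀ p, N.Pre p t' ≠ 0 → p ∈ VC := fun p hp =>
    hvc.mem_of_incident (t := t') (hout j) (by simp [incident, hpost])
      (by simp only [incident]; omega)
      (by rintro rfl; exact hp hpre)
  exact hsafe.effect_ne_one_of_marked hreach hj (enabled_of_nbhd_eq (fun p => (h01 p t').1) hnb ht hin) heff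
end

section
/- There is a reduction from reachability in 1-safe Petri nets to Signed Digraph Pebbling: given a 1-safe net N, construct the bipartite digraph with red vertices the places and blue vertices the transitions, an A+ arc from p to t whenever Pre(p,t)=1, an A− arc from t to p whenever Pre(p,t)=1 and Post(p,t)=0, and an A+ arc from t to p whenever Pre(p,t)=0 and Post(p,t)=1. Then M1 → t → M2 in N iff from the pebbling state pebbling exactly the places marked in M1, the blue vertex t is enabled and the resulting legal move yields the state pebbling exactly the places marked in M2. -/
variable {P T : Type}

/-- Arc `p → t` in `A⁺` of the pebbling instance: `Pre p t = 1`. -/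
def arcPlusIn (N : PetriNet P T) (p : P) (t : T) : Prop := N.Pre p t = 1
/-- Arc `t → p` in `A⁻`: `Pre p t = 1` and `Post p t = 0`. -/
def arcMinusOut (N : PetriNet P T) (t : T) (p : P) : Prop := N.Pre p t = 1 ∧ N.Post p t = 0
/-- Arc `t → p` in `A⁺`: `Pre p t = 0` and `Post p t = 1`. -/
def arcPlusOut (N : PetriNet P T) (t : T) (p : P) : Prop := N.Pre p t = 0 ∧ N.Post p t = 1

/-- The blue vertex `t` is enabled at pebbling state `X` (there are no `A⁻` arcs into
blue vertices in this construction, so only the `A⁺` condition remains). -/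
def pebEnabled (N : PetriNet P T) (X : Set P) (t : T) : Prop :=
  ∀ p, arcPlusIn N p t → p ∈ X

/-- The legal move using blue vertex `t`: unpebble `A⁻`-successors, pebble `A⁺`-successors. -/
def pebMove (N : PetriNet P T) (X : Set P) (t : T) : Set P :=
  (X \ {p | arcMinusOut N t p}) ∪ {p | arcPlusOut N t p}

/-! Markings of a `1`-safe net take values in `{0, 1}`, so each is determined by the set of
places it marks, and that set is the pebbling state. Firing an enabled `t` from a reachable
marking again gives a reachable, hence `0/1`-valued, marking, and a case analysis on the
values of `M p`, `Pre p t`, `Post p t` shows that its marked places are exactly the result of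
the pebbling move. -/

section

variable {N : PetriNet P T} {M : P → ℕ} {t : T}

theorem oneSafe.fire_le_one {M0 : P → ℕ} (hsafe : oneSafe N M0) (hM : reachable N M0 M)
    (hen : enabled N M t) (p : P) : fire N M t p ≤ 1 :=
  hsafe _ (hM.tail ⟨t, hen, rfl⟩) p

theorem pebEnabled_iff_enabled (hPre : ∀ p, N.Pre p t ≤ 1) (hM : ∀ p, M p ≤ 1) :
    pebEnabled N {p | M p = 1} t ↔ enabled N M t := by
  constructor
  · intro hpeb p
    rcases Nat.le_one_iff_eq_zero_or_eq_one.mp (hPre p) with h | h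
    · omega
    · have : M p = 1 := hpeb p h
      omega
  · intro hen p (hp : N.Pre p t = 1)
    exact le_antisymm (hM p) (hp ▸ hen p)

/-- Safety of the successor is what excludes `Pre p t = 0`, `Post p t = 1` at a marked place,
the one case where firing (two tokens) and the pebbling move (one pebble) disagree. -/
theorem pebMove_eq_setOf_fire_eq_one (hen : enabled N M t) (hM : ∀ p, M p ≤ 1)
    (hfire : ∀ p, fire N M t p ≤ 1) :
    pebMove N {p | M p = 1} t = {p | fire N M t p = 1} := by
  ext p
  have := hen p
  have := hM p
  have := hfire p
  simp only [pebMove, arcMinusOut, arcPlusOut, fire, Set.mem_union, Set.mem_sdiff,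
    Set.mem_ofPred_eq] at *
  omega

theorem eq_of_setOf_eq_one_eq {M M' : P → ℕ} (hM : ∀ p, M p ≤ 1) (hM' : ∀ p, M' p ≤ 1)
    (h : {p | M p = 1} = {p | M' p = 1}) : M = M' := by
  funext p
  have hp : M p = 1 ↔ M' p = 1 := Set.ext_iff.mp h p
  have := hM p
  have := hM' p
  omega

end

theorem pebbling_simulates_firing_general
    (N : PetriNet P T) (M0 : P → ℕ)
    (hPre : ∀ p t, N.Pre p t ≤ 1)
    (hsafe : oneSafe N M0)
    (M1 M2 : P → ℕ) (h1 : reachable N M0 M1) (hM2 : ∀ p, M2 p ≤ 1) (t : T) :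
    (enabled N M1 t ∧ M2 = fire N M1 t) ↔
      (pebEnabled N {p | M1 p = 1} t ∧
        pebMove N {p | M1 p = 1} t = {p | M2 p = 1}) := by
  have hM1 : ∀ p, M1 p ≤ 1 := hsafe M1 h1
  have henabled := pebEnabled_iff_enabled (hPre · t) hM1
  constructor
  · rintro ⟨hen, rfl⟩
    exact ⟨henabled.2 hen,
      pebMove_eq_setOf_fire_eq_one hen hM1 (hsafe.fire_le_one h1 hen)⟩
  · rintro ⟨hpeb, hmove⟩
    have hen := henabled.1 hpeb
    refine ⟨hen, eq_of_setOf_eq_one_eq hM2 (hsafe.fire_le_one h1 hen) ?_⟩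
    rw [← hmove, pebMove_eq_setOf_fire_eq_one hen hM1 (hsafe.fire_le_one h1 hen)]

/-- Correctness of the translation of a 1-safe Petri net into a Signed Digraph Pebbling
instance: `M1 →t→ M2` in the net iff in the pebbling instance, from the state pebbling
exactly the places marked in `M1`, the blue vertex `t` is enabled and the legal move
yields the state pebbling exactly the places marked in `M2`. -/
theorem pebbling_simulates_firing
    (N : PetriNet P T) (M0 : P → ℕ)
    (hPre : ∀ p t, N.Pre p t ≤ 1) (hPost : ∀ p t, N.Post p t ≤ 1)
    (hsafe : oneSafe N M0)
    (M1 M2 : P → ℕ) (h1 : reachable N M0 M1) (hM2 : ∀ p, M2 p ≤ 1) (t : T) :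
    (enabled N M1 t ∧ M2 = fire N M1 t) ↔
      (pebEnabled N {p | M1 p = 1} t ∧
        pebMove N {p | M1 p = 1} t = {p | M2 p = 1}) :=
  pebbling_simulates_firing_general N M0 hPre hsafe M1 M2 h1 hM2 t
end
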